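/- arXiv:2411.00362 — 4 statements merged into one kernel-verified Lean document; each statement's English description precedes it below -/
import Mathlib

section
/- Define R(v_h) = argmin{J(v) : v ∈ V, P_0 v = v_h} and R_h(v_h) = argmin{J_0(v) : v ∈ V, P_0 v = v_h}, where J_0(v) = (1/2)a(v,v). Then for every v_h ∈ V_h, R(v_h) - R_h(v_h) = R_f(f), where R_f(f) = argmin{J(v) : v ∈ V_f}; in particular the difference R(v_h) - R_h(v_h) is independent of v_h. -/
/-! Minimizers of `J` and `J₀` on the fiber `{P₀ v = v_h}`, and the minimizer of `J` on
`V_f = ker P₀`, satisfy the Euler equations `a(R v_h, w) = f w`, `a(R_h v_h, w) = 0` and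
`a(R_f, w) = f w` for all `w ∈ V_f`. Hence `d = R v_h - R_h v_h - R_f` lies in `V_f` and is
`a`-orthogonal to `V_f`, so `a(d, d) = 0` and coercivity forces `d = 0`. -/

section QuadraticMinimization

variable {E F : Type*} [AddCommGroup E] [Module ℝ E] [AddCommGroup F] [Module ℝ F]

theorem eq_zero_of_forall_nonneg_mul_add_sq_mul {L Q : ℝ}
    (h : ∀ t : ℝ, 0 ≤ t * L + t ^ 2 * Q) : L = 0 := by
  have hdiscr : discrim Q L 0 ≤ 0 := discrim_le_zero fun t => by nlinarith [h t]
  rw [discrim, mul_zero, sub_zero] at hdiscr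
  exact pow_eq_zero_iff two_ne_zero |>.mp (le_antisymm hdiscr (sq_nonneg L))

theorem apply_eq_of_forall_le_on_fiber (B : E →ₗ[ℝ] E →ₗ[ℝ] ℝ)
    (hB : ∀ u v, B u v = B v u) (g : E →ₗ[ℝ] ℝ) (P : E →ₗ[ℝ] F) {x : E}
    (hx : ∀ v, P v = P x → (1 / 2) * B x x - g x ≤ (1 / 2) * B v v - g v) :
    ∀ w, P w = 0 → B x w = g w := by
  intro w hw
  refine sub_eq_zero.mp <| eq_zero_of_forall_nonneg_mul_add_sq_mul (Q := (1 / 2) * B w w)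
    fun t => ?_
  have hle := hx (x + t • w) (by rw [map_add, map_smul, hw, smul_zero, add_zero])
  simp only [map_add, map_smul, LinearMap.add_apply, LinearMap.smul_apply, smul_eq_mul,
    hB w x] at hle
  linarith

end QuadraticMinimization

theorem eq_zero_of_coercive_of_apply_self_eq_zero {E : Type*} [NormedAddCommGroup E]
    (q : E → ℝ) {α : ℝ} (hα : 0 < α) (hcoer : ∀ v, α * ‖v‖ ^ 2 ≤ q v) {v : E}
    (hv : q v = 0) : v = 0 := by
  have hsq : ‖v‖ ^ 2 ≤ 0 := by nlinarith [hcoer v]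
  exact norm_eq_zero.mp <| pow_eq_zero_iff two_ne_zero |>.mp (le_antisymm hsq (sq_nonneg _))

theorem stmt2_general
    {V : Type*} [NormedAddCommGroup V] [InnerProductSpace ℝ V]
    (a : V →ₗ[ℝ] V →ₗ[ℝ] ℝ)
    (hsymm : ∀ u v : V, a u v = a v u)
    (α : ℝ) (hα : 0 < α) (hcoer : ∀ v : V, α * ‖v‖ ^ 2 ≤ a v v)
    (f : V →L[ℝ] ℝ)
    (J J0 : V → ℝ)
    (hJ : ∀ v, J v = (1 / 2) * a v v - f v)
    (hJ0 : ∀ v, J0 v = (1 / 2) * a v v)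
    (Vh : Submodule ℝ V) [CompleteSpace Vh]
    (P0 : V → V) (hP0 : ∀ v, P0 v = (Vh.orthogonalProjection v : V))
    (Vf : Set V) (hVf : Vf = {v : V | P0 v = 0})
    (R Rh : V → V) (Rff : V)
    (hR : ∀ vh ∈ Vh, P0 (R vh) = vh ∧ ∀ v : V, P0 v = vh → J (R vh) ≤ J v)
    (hRh : ∀ vh ∈ Vh, P0 (Rh vh) = vh ∧ ∀ v : V, P0 v = vh → J0 (Rh vh) ≤ J0 v)
    (hRff : Rff ∈ Vf ∧ ∀ v ∈ Vf, J Rff ≤ J v) :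
    ∀ vh ∈ Vh, R vh - Rh vh = Rff := by
  intro vh hvh
  obtain rfl : P0 = Vh.starProjection := funext fun v => (hP0 v).trans (Vh.starProjection_apply v)
  subst hVf
  set P : V →ₗ[ℝ] V := Vh.starProjection.toLinearMap
  obtain ⟨hRP, hRmin⟩ := hR vh hvh
  obtain ⟨hRhP, hRhmin⟩ := hRh vh hvh
  obtain ⟨hRffP, hRffmin⟩ := hRff
  have eulerR := apply_eq_of_forall_le_on_fiber a hsymm f P (x := R vh)
    fun v hv => by simpa only [hJ, ContinuousLinearMap.coe_coe] using hRmin v (hv.trans hRP)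
  have eulerRh := apply_eq_of_forall_le_on_fiber a hsymm 0 P (x := Rh vh)
    fun v hv => by simpa only [hJ0, LinearMap.zero_apply, sub_zero] using hRhmin v (hv.trans hRhP)
  have eulerRff := apply_eq_of_forall_le_on_fiber a hsymm f P (x := Rff)
    fun v hv => by simpa only [hJ, ContinuousLinearMap.coe_coe] using hRffmin v (hv.trans hRffP)
  have hd : P (R vh - Rh vh - Rff) = 0 := by
    have hRffP' : Vh.starProjection Rff = 0 := hRffP
    simp only [P, ContinuousLinearMap.coe_coe, map_sub, hRP, hRhP, hRffP', sub_self, sub_zero]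
  refine sub_eq_zero.mp <| eq_zero_of_coercive_of_apply_self_eq_zero (fun v => a v v) hα hcoer ?_
  set d := R vh - Rh vh - Rff
  calc a d d = a (R vh) d - a (Rh vh) d - a Rff d := by
        rw [LinearMap.map_sub₂, LinearMap.map_sub₂]
    _ = f d - 0 - f d := by rw [eulerR d hd, eulerRh d hd, eulerRff d hd]; rfl
    _ = 0 := by ring

/-- With `R(v_h)` the constrained minimizer of `J` and `R_h(v_h)` the
constrained minimizer of `J₀(v) = (1/2) a(v,v)`, and `R_f(f)` the minimizer of `J`
over `V_f`, one has `R(v_h) - R_h(v_h) = R_f(f)` for every `v_h ∈ V_h`; in particular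
the difference is independent of `v_h`. -/
theorem stmt2
    {V : Type*} [NormedAddCommGroup V] [InnerProductSpace ℝ V] [CompleteSpace V]
    (a : V →ₗ[ℝ] V →ₗ[ℝ] ℝ)
    (hsymm : ∀ u v : V, a u v = a v u)
    (M : ℝ) (hcont : ∀ u v : V, |a u v| ≤ M * ‖u‖ * ‖v‖)
    (α : ℝ) (hα : 0 < α) (hcoer : ∀ v : V, α * ‖v‖ ^ 2 ≤ a v v)
    (f : V →L[ℝ] ℝ)
    (J J0 : V → ℝ)
    (hJ : ∀ v, J v = (1 / 2) * a v v - f v)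
    (hJ0 : ∀ v, J0 v = (1 / 2) * a v v)
    (Vh : Submodule ℝ V) [CompleteSpace Vh]
    (P0 : V → V) (hP0 : ∀ v, P0 v = (Vh.orthogonalProjection v : V))
    (Vf : Set V) (hVf : Vf = {v : V | P0 v = 0})
    (R Rh : V → V) (Rff : V)
    (hR : ∀ vh ∈ Vh, P0 (R vh) = vh ∧ ∀ v : V, P0 v = vh → J (R vh) ≤ J v)
    (hRh : ∀ vh ∈ Vh, P0 (Rh vh) = vh ∧ ∀ v : V, P0 v = vh → J0 (Rh vh) ≤ J0 v)
    (hRff : Rff ∈ Vf ∧ ∀ v ∈ Vf, J Rff ≤ J v) :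
    ∀ vh ∈ Vh, R vh - Rh vh = Rff :=
  stmt2_general a hsymm α hα hcoer f J J0 hJ hJ0 Vh P0 hP0 Vf hVf R Rh Rff hR hRh hRff
end

section
/- For every v_h ∈ V_h, J(R(v_h)) = J(R_h(v_h)) + J(R_f), where R_f = R(v_h) - R_h(v_h) ∈ V_f. Consequently, the minimizer of v_h ↦ J(R(v_h)) over V_h coincides with the minimizer of v_h ↦ J(R_h(v_h)) over V_h. -/
/-!
Since `R_h(v_h)` minimizes `J_0` on the fiber `R_h(v_h) + V_f`, Fermat's rule along each line
`t ↦ R_h(v_h) + t w` kills the polar form `a(R_h(v_h), w) + a(w, R_h(v_h))` for `w ∈ V_f`, so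
`J(R_h(v_h) + w) = J(R_h(v_h)) + J(w)` on `V_f`. With `w = R(v_h) - R_h(v_h)` this is the splitting,
and comparing `R(v_h)` with the other points of its fiber shows that `R(v_h) - R_h(v_h)` minimizes
`J` on `V_f`. Hence `J(R(v_h) - R_h(v_h))` is the minimum of `J` on `V_f` for every `v_h`, and the
two reduced functionals differ by that constant.
-/

theorem eq_zero_of_forall_mul_add_sq_mul_nonneg {c d : ℝ}
    (h : ∀ t : ℝ, 0 ≤ t * c + t ^ 2 * d) : c = 0 := by
  have hmin : IsLocalMin (fun t : ℝ => t * c + t ^ 2 * d) 0 :=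
    Filter.Eventually.of_forall fun t => by simpa using h t
  have hlin : HasDerivAt (fun t : ℝ => t * c) c 0 := hasDerivAt_mul_const c
  have hquad : HasDerivAt (fun t : ℝ => t ^ 2 * d) 0 0 := by
    simpa using (hasDerivAt_pow 2 (0 : ℝ)).mul_const d
  have hderiv : HasDerivAt (fun t : ℝ => t * c + t ^ 2 * d) c 0 :=
    (hlin.add hquad).congr_deriv (add_zero c)
  exact hmin.hasDerivAt_eq_zero hderiv

section Energy

variable {V : Type*} [AddCommGroup V] [Module ℝ V] (a : V →ₗ[ℝ] V →ₗ[ℝ] ℝ)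

theorem apply_add_smul_add_smul (x w : V) (t : ℝ) :
    a (x + t • w) (x + t • w) = a x x + t * (a x w + a w x) + t ^ 2 * a w w := by
  simp only [map_add, map_smul, LinearMap.add_apply, LinearMap.smul_apply, smul_eq_mul]
  ring

theorem apply_add_apply_eq_zero_of_forall_le {x w : V}
    (h : ∀ t : ℝ, a x x ≤ a (x + t • w) (x + t • w)) : a x w + a w x = 0 :=
  eq_zero_of_forall_mul_add_sq_mul_nonneg (d := a w w) fun t => by
    linarith [h t, apply_add_smul_add_smul a x w t]

noncomputable def energy (f : V →ₗ[ℝ] ℝ) (v : V) : ℝ := 1 / 2 * a v v - f v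

variable {f : V →ₗ[ℝ] ℝ}

theorem energy_add_of_apply_add_apply_eq_zero {x w : V}
    (h : a x w + a w x = 0) : energy a f (x + w) = energy a f x + energy a f w := by
  simp only [energy, map_add, LinearMap.add_apply]
  linarith

variable {W : Type*} [AddCommGroup W] [Module ℝ W] {P : V →ₗ[ℝ] W} {x : V}

theorem energy_add_of_isMinOn_fiber (hx : IsMinOn (energy a 0) (P ⁻¹' {P x}) x) {w : V}
    (hw : w ∈ LinearMap.ker P) : energy a f (x + w) = energy a f x + energy a f w := by
  refine energy_add_of_apply_add_apply_eq_zero a <|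
    apply_add_apply_eq_zero_of_forall_le a fun t => ?_
  have hfiber : P (x + t • w) = P x := by simp [LinearMap.mem_ker.mp hw]
  have : energy a 0 x ≤ energy a 0 (x + t • w) := hx hfiber
  simp only [energy, LinearMap.zero_apply, sub_zero] at this
  linarith

variable {y : V}

theorem energy_eq_energy_add_energy_sub (hx : IsMinOn (energy a 0) (P ⁻¹' {P x}) x)
    (hxy : P x = P y) : energy a f y = energy a f x + energy a f (y - x) := by
  have hker : y - x ∈ LinearMap.ker P := by simp [hxy]
  rw [← energy_add_of_isMinOn_fiber a hx hker, add_sub_cancel]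

theorem isMinOn_ker_energy_sub (hy : IsMinOn (energy a f) (P ⁻¹' {P y}) y)
    (hx : IsMinOn (energy a 0) (P ⁻¹' {P x}) x) (hxy : P x = P y) :
    IsMinOn (energy a f) (LinearMap.ker P) (y - x) := by
  intro w hw
  show energy a f (y - x) ≤ energy a f w
  have hfiber : P (x + w) = P y := by simp [LinearMap.mem_ker.mp hw, hxy]
  have : energy a f y ≤ energy a f (x + w) := hy hfiber
  rw [energy_eq_energy_add_energy_sub a hx hxy, energy_add_of_isMinOn_fiber a hx hw] at this
  linarith

end Energy

theorem stmt4_general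
    {V : Type*} [NormedAddCommGroup V] [InnerProductSpace ℝ V]
    (a : V →ₗ[ℝ] V →ₗ[ℝ] ℝ)
    (f : V →L[ℝ] ℝ)
    (J J0 : V → ℝ)
    (hJ : ∀ v, J v = (1 / 2) * a v v - f v)
    (hJ0 : ∀ v, J0 v = (1 / 2) * a v v)
    (Vh : Submodule ℝ V) [CompleteSpace Vh]
    (P0 : V → V) (hP0 : ∀ v, P0 v = (Submodule.orthogonalProjection Vh v : V))
    (Vf : Set V) (hVf : Vf = {v : V | P0 v = 0})
    (R Rh : V → V)
    (hR : ∀ vh ∈ Vh, P0 (R vh) = vh ∧ ∀ v : V, P0 v = vh → J (R vh) ≤ J v)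
    (hRh : ∀ vh ∈ Vh, P0 (Rh vh) = vh ∧ ∀ v : V, P0 v = vh → J0 (Rh vh) ≤ J0 v) :
    (∀ vh ∈ Vh, R vh - Rh vh ∈ Vf ∧
        J (R vh) = J (Rh vh) + J (R vh - Rh vh)) ∧
    (∀ uh ∈ Vh,
      ((∀ vh ∈ Vh, J (R uh) ≤ J (R vh)) ↔ (∀ vh ∈ Vh, J (Rh uh) ≤ J (Rh vh)))) := by
  obtain rfl : P0 = Vh.starProjection := funext hP0
  obtain rfl : J = energy a f := funext hJ
  obtain rfl : J0 = energy a 0 := funext fun v => by simp [hJ0, energy]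
  subst hVf
  set P : V →ₗ[ℝ] V := Vh.starProjection.toLinearMap
  have hfiber vh (hvh : vh ∈ Vh) : P (Rh vh) = P (R vh) := by
    simp only [P, ContinuousLinearMap.coe_coe, (hR vh hvh).1, (hRh vh hvh).1]
  have hminR vh (hvh : vh ∈ Vh) : IsMinOn (energy a f) (P ⁻¹' {P (R vh)}) (R vh) :=
    fun v hv => (hR vh hvh).2 v (hv.trans (hR vh hvh).1)
  have hminRh vh (hvh : vh ∈ Vh) : IsMinOn (energy a 0) (P ⁻¹' {P (Rh vh)}) (Rh vh) :=
    fun v hv => (hRh vh hvh).2 v (hv.trans (hRh vh hvh).1)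
  have hker vh (hvh : vh ∈ Vh) : R vh - Rh vh ∈ LinearMap.ker P := by simp [← hfiber vh hvh]
  have hsplit vh (hvh : vh ∈ Vh) :=
    energy_eq_energy_add_energy_sub a (f := f) (hminRh vh hvh) (hfiber vh hvh)
  have hmin vh (hvh : vh ∈ Vh) :=
    isMinOn_ker_energy_sub a (hminR vh hvh) (hminRh vh hvh) (hfiber vh hvh)
  refine ⟨fun vh hvh => ⟨hker vh hvh, hsplit vh hvh⟩,
    fun uh huh => forall₂_congr fun vh hvh => ?_⟩
  have hconst : energy a f (R uh - Rh uh) = energy a f (R vh - Rh vh) :=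
    ((hmin uh huh).isGLB (hker uh huh)).unique ((hmin vh hvh).isGLB (hker vh hvh))
  rw [hsplit uh huh, hsplit vh hvh, hconst, add_le_add_iff_right]

/-- For every `v_h ∈ V_h`, `J(R(v_h)) = J(R_h(v_h)) + J(R(v_h) - R_h(v_h))`
with `R(v_h) - R_h(v_h) ∈ V_f`; consequently the minimizer of `v_h ↦ J(R(v_h))` over `V_h`
coincides with the minimizer of `v_h ↦ J(R_h(v_h))` over `V_h`. -/
theorem stmt4
    {V : Type*} [NormedAddCommGroup V] [InnerProductSpace ℝ V] [CompleteSpace V]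
    (a : V →ₗ[ℝ] V →ₗ[ℝ] ℝ)
    (hsymm : ∀ u v : V, a u v = a v u)
    (M : ℝ) (hcont : ∀ u v : V, |a u v| ≤ M * ‖u‖ * ‖v‖)
    (α : ℝ) (hα : 0 < α) (hcoer : ∀ v : V, α * ‖v‖ ^ 2 ≤ a v v)
    (f : V →L[ℝ] ℝ)
    (J J0 : V → ℝ)
    (hJ : ∀ v, J v = (1 / 2) * a v v - f v)
    (hJ0 : ∀ v, J0 v = (1 / 2) * a v v)
    (Vh : Submodule ℝ V) [CompleteSpace Vh]
    (P0 : V → V) (hP0 : ∀ v, P0 v = (Submodule.orthogonalProjection Vh v : V))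
    (Vf : Set V) (hVf : Vf = {v : V | P0 v = 0})
    (R Rh : V → V)
    (hR : ∀ vh ∈ Vh, P0 (R vh) = vh ∧ ∀ v : V, P0 v = vh → J (R vh) ≤ J v)
    (hRh : ∀ vh ∈ Vh, P0 (Rh vh) = vh ∧ ∀ v : V, P0 v = vh → J0 (Rh vh) ≤ J0 v) :
    (∀ vh ∈ Vh, R vh - Rh vh ∈ Vf ∧
        J (R vh) = J (Rh vh) + J (R vh - Rh vh)) ∧
    (∀ uh ∈ Vh,
      ((∀ vh ∈ Vh, J (R uh) ≤ J (R vh)) ↔ (∀ vh ∈ Vh, J (Rh uh) ≤ J (Rh vh)))) :=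
  stmt4_general a f J J0 hJ hJ0 Vh P0 hP0 Vf hVf R Rh hR hRh
end

section
/- If u ∈ V solves a(u, v) = f(v) for all v ∈ V (the global variational problem) and u_h ∈ V_h is the minimizer of v_h ↦ J(R(v_h)), then R(u_h) = u, i.e., the exact solution is recovered by reconstruction from the macroscopic minimizer. -/
/-! The exact solution `u` is the unique global minimizer of `J`, since
`J v - J u = ½ a(v - u, v - u)` and `a` is coercive. It is admissible in the local problem
at `P₀ u`, so `J (R uₕ) ≤ J (R (P₀ u)) ≤ J u`, which forces `R uₕ = u`. -/

section Energy

variable {V : Type*} [AddCommGroup V] [Module ℝ V] (a : V →ₗ[ℝ] V →ₗ[ℝ] ℝ)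

theorem energy_sub_energy_of_solution (hsymm : ∀ u v : V, a u v = a v u)
    {f J : V → ℝ} (hJ : ∀ v, J v = (1 / 2) * a v v - f v)
    {u : V} (hu : ∀ v, a u v = f v) (v : V) :
    J v - J u = (1 / 2) * a (v - u) (v - u) := by
  have hexpand : a (v - u) (v - u) = a v v - a u v - a v u + a u u := by
    simp only [map_sub, LinearMap.sub_apply]; ring
  rw [hJ, hJ, hexpand, ← hu v, ← hu u, hsymm v u]
  ring

end Energy

theorem eq_zero_of_coercive_of_apply_self_nonpos {V : Type*} [NormedAddCommGroup V] [Module ℝ V]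
    (a : V →ₗ[ℝ] V →ₗ[ℝ] ℝ) {α : ℝ} (hα : 0 < α) (hcoer : ∀ v : V, α * ‖v‖ ^ 2 ≤ a v v)
    {v : V} (hv : a v v ≤ 0) : v = 0 := by
  have hsq : ‖v‖ ^ 2 ≤ 0 := by nlinarith [hcoer v]
  exact norm_eq_zero.mp (pow_eq_zero_iff two_ne_zero |>.mp (le_antisymm hsq (sq_nonneg _)))

theorem eq_of_energy_le_energy_of_solution {V : Type*} [NormedAddCommGroup V] [Module ℝ V]
    (a : V →ₗ[ℝ] V →ₗ[ℝ] ℝ) (hsymm : ∀ u v : V, a u v = a v u)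
    {α : ℝ} (hα : 0 < α) (hcoer : ∀ v : V, α * ‖v‖ ^ 2 ≤ a v v)
    {f J : V → ℝ} (hJ : ∀ v, J v = (1 / 2) * a v v - f v)
    {u : V} (hu : ∀ v, a u v = f v) {v : V} (hle : J v ≤ J u) : v = u := by
  have hdiff := energy_sub_energy_of_solution a hsymm hJ hu v
  exact sub_eq_zero.mp (eq_zero_of_coercive_of_apply_self_nonpos a hα hcoer (by linarith))

theorem stmt9_general
    {V : Type*} [NormedAddCommGroup V] [InnerProductSpace ℝ V]
    (a : V →ₗ[ℝ] V →ₗ[ℝ] ℝ)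
    (hsymm : ∀ u v : V, a u v = a v u)
    (α : ℝ) (hα : 0 < α) (hcoer : ∀ v : V, α * ‖v‖ ^ 2 ≤ a v v)
    (f : V →L[ℝ] ℝ)
    (J : V → ℝ) (hJ : ∀ v, J v = (1 / 2) * a v v - f v)
    (Vh : Submodule ℝ V) [CompleteSpace Vh]
    (P0 : V → V) (hP0 : ∀ v, P0 v = (Submodule.orthogonalProjectionOnto Vh v : V))
    (R : V → V)
    (hR : ∀ vh ∈ Vh, P0 (R vh) = vh ∧ ∀ v : V, P0 v = vh → J (R vh) ≤ J v)
    (u : V) (hu : ∀ v : V, a u v = f v)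
    (uh : V) (huhmin : ∀ vh ∈ Vh, J (R uh) ≤ J (R vh)) :
    R uh = u := by
  have hPu : P0 u ∈ Vh := hP0 u ▸ Submodule.coe_mem _
  have hle : J (R uh) ≤ J u := (huhmin _ hPu).trans ((hR _ hPu).2 u rfl)
  exact eq_of_energy_le_energy_of_solution a hsymm hα hcoer hJ hu hle

/-- If `u ∈ V` solves `a(u, v) = f(v)` for all `v ∈ V` and `u_h ∈ V_h`
minimizes `v_h ↦ J(R(v_h))` over `V_h`, then `R(u_h) = u`. -/
theorem stmt9
    {V : Type*} [NormedAddCommGroup V] [InnerProductSpace ℝ V] [CompleteSpace V]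
    (a : V →ₗ[ℝ] V →ₗ[ℝ] ℝ)
    (hsymm : ∀ u v : V, a u v = a v u)
    (M : ℝ) (hcont : ∀ u v : V, |a u v| ≤ M * ‖u‖ * ‖v‖)
    (α : ℝ) (hα : 0 < α) (hcoer : ∀ v : V, α * ‖v‖ ^ 2 ≤ a v v)
    (f : V →L[ℝ] ℝ)
    (J : V → ℝ) (hJ : ∀ v, J v = (1 / 2) * a v v - f v)
    (Vh : Submodule ℝ V) [CompleteSpace Vh]
    (P0 : V → V) (hP0 : ∀ v, P0 v = (Submodule.orthogonalProjectionOnto Vh v : V))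
    (R : V → V)
    (hR : ∀ vh ∈ Vh, P0 (R vh) = vh ∧ ∀ v : V, P0 v = vh → J (R vh) ≤ J v)
    (u : V) (hu : ∀ v : V, a u v = f v)
    (uh : V) (huh : uh ∈ Vh) (huhmin : ∀ vh ∈ Vh, J (R uh) ≤ J (R vh)) :
    R uh = u :=
  stmt9_general a hsymm α hα hcoer f J hJ Vh P0 hP0 R hR u hu uh huhmin
end

section
/- Abstract fine-scale stability: if R_f(f) ∈ V_f satisfies a(R_f(f), w) = (F, w) for all w ∈ V_f, and the projection-error estimate ‖v - P_0 v‖ ≤ C h |||v||| holds for all v ∈ V, then |||R_f(f)|||² ≤ C h ‖F‖ |||R_f(f)|||, and hence |||R_f(f)||| ≤ C h ‖F‖. -/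
/-! On `V_f` the projection error is the function itself, so the approximation property gives
`‖R_f(f)‖ ≤ C h |||R_f(f)|||`. Testing the fine-scale equation with `w = R_f(f)` and applying
Cauchy–Schwarz then yields `|||R_f(f)|||² ≤ ‖F‖ ‖R_f(f)‖ ≤ C h ‖F‖ |||R_f(f)|||`; dividing by
`|||R_f(f)|||` gives the second bound. -/

theorem le_of_sq_le_mul {e K : ℝ} (hK : 0 ≤ K) (h : e ^ 2 ≤ K * e) : e ≤ K := by
  nlinarith

-- For `x < 0` both sides vanish, as `√x = 0` there.
theorem Real.sq_sqrt_le_mul_sqrt {x K : ℝ} (h : x ≤ K * √x) : √x ^ 2 ≤ K * √x := by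
  rcases le_or_gt 0 x with hx | hx
  · rwa [Real.sq_sqrt hx]
  · simp [Real.sqrt_eq_zero'.mpr hx.le]

theorem stmt18_general
    {V : Type*} [NormedAddCommGroup V] [InnerProductSpace ℝ V]
    (a : V →ₗ[ℝ] V →ₗ[ℝ] ℝ)
    (P0 : V → V)
    (Vf : Set V) (hVf : Vf = {v : V | P0 v = 0})
    (C h : ℝ) (hC : 0 < C) (hh : 0 < h)
    (happrox : ∀ v : V, ‖v - P0 v‖ ≤ C * h * Real.sqrt (a v v))
    (F : V) (Rff : V) (hRff : Rff ∈ Vf)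
    (heq : ∀ w ∈ Vf, a Rff w = inner ℝ F w) :
    Real.sqrt (a Rff Rff) ^ 2 ≤ C * h * ‖F‖ * Real.sqrt (a Rff Rff) ∧
      Real.sqrt (a Rff Rff) ≤ C * h * ‖F‖ := by
  have hP0 : P0 Rff = 0 := by
    subst hVf
    exact hRff
  have hnorm : ‖Rff‖ ≤ C * h * √(a Rff Rff) := by
    simpa only [hP0, sub_zero] using happrox Rff
  have henergy : a Rff Rff ≤ C * h * ‖F‖ * √(a Rff Rff) :=
    calc a Rff Rff = inner ℝ F Rff := heq Rff hRff
      _ ≤ ‖F‖ * ‖Rff‖ := real_inner_le_norm F Rff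
      _ ≤ ‖F‖ * (C * h * √(a Rff Rff)) := by gcongr
      _ = C * h * ‖F‖ * √(a Rff Rff) := by ring
  have hsq := Real.sq_sqrt_le_mul_sqrt henergy
  exact ⟨hsq, le_of_sq_le_mul (by positivity) hsq⟩

/-- Abstract fine-scale stability: if `R_f(f) ∈ V_f` satisfies
`a(R_f(f), w) = ⟪F, w⟫` for all `w ∈ V_f`, and `‖v - P₀ v‖ ≤ C h |||v|||` for all `v ∈ V`,
then `|||R_f(f)|||² ≤ C h ‖F‖ |||R_f(f)|||` and hence `|||R_f(f)||| ≤ C h ‖F‖`. -/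
theorem stmt18
    {V : Type*} [NormedAddCommGroup V] [InnerProductSpace ℝ V] [CompleteSpace V]
    (a : V →ₗ[ℝ] V →ₗ[ℝ] ℝ)
    (hsymm : ∀ u v : V, a u v = a v u)
    (M : ℝ) (hcont : ∀ u v : V, |a u v| ≤ M * ‖u‖ * ‖v‖)
    (α : ℝ) (hα : 0 < α) (hcoer : ∀ v : V, α * ‖v‖ ^ 2 ≤ a v v)
    (Vh : Submodule ℝ V) [CompleteSpace Vh]
    (P0 : V → V) (hP0 : ∀ v, P0 v = (Vh.orthogonalProjectionOnto v : V))
    (Vf : Set V) (hVf : Vf = {v : V | P0 v = 0})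
    (C h : ℝ) (hC : 0 < C) (hh : 0 < h)
    (happrox : ∀ v : V, ‖v - P0 v‖ ≤ C * h * Real.sqrt (a v v))
    (F : V) (Rff : V) (hRff : Rff ∈ Vf)
    (heq : ∀ w ∈ Vf, a Rff w = inner ℝ F w) :
    Real.sqrt (a Rff Rff) ^ 2 ≤ C * h * ‖F‖ * Real.sqrt (a Rff Rff) ∧
      Real.sqrt (a Rff Rff) ≤ C * h * ‖F‖ :=
  stmt18_general a P0 Vf hVf C h hC hh happrox F Rff hRff heq
end
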